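/- arXiv:1605.05939 — 2 statements merged into one kernel-verified Lean document; each statement's English description precedes it below -/
import Mathlib

section
/- Let S, T ⊆ ℤ/nℤ be formally dual subsets. Then |S|² = Σ_{e | n} φ(n/e)·ν_S(e), where φ is Euler's totient function. -/
open Finset Complex Polynomial

/-- Weight enumerator: number of ordered pairs in `S × S` with difference `y`. -/
def nuW {n : ℕ} [NeZero n] (S : Finset (ZMod n)) (y : ZMod n) : ℕ :=
  ((S ×ˢ S).filter (fun p => p.1 - p.2 = y)).card

/-- `n`-th root of unity `ζ_n = exp(2πi/n)`. -/
noncomputable def zetaC (n : ℕ) : ℂ := Complex.exp (2 * Real.pi * Complex.I / n)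

/-- Formal duality of `S, T ⊆ ℤ/nℤ` (both directions). -/
def IsFormallyDual {n : ℕ} [NeZero n] (S T : Finset (ZMod n)) : Prop :=
  S.Nonempty ∧ T.Nonempty ∧
  (∀ y : ZMod n, ((S.card : ℂ) ^ 2 / (T.card : ℂ)) * (nuW T y : ℂ) =
    ∑ v : ZMod n, (nuW S v : ℂ) * zetaC n ^ (v.val * y.val)) ∧
  (∀ y : ZMod n, ((T.card : ℂ) ^ 2 / (S.card : ℂ)) * (nuW S y : ℂ) =
    ∑ v : ZMod n, (nuW T v : ℂ) * zetaC n ^ (v.val * y.val))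

lemma zetaC_prim (n : ℕ) [NeZero n] : IsPrimitiveRoot (zetaC n) n :=
  Complex.isPrimitiveRoot_exp n (NeZero.ne n)

lemma zetaC_pow_mod (n : ℕ) [NeZero n] (a : ℕ) : zetaC n ^ a = zetaC n ^ (a % n) := by
  conv_lhs => rw [← Nat.mod_add_div a n]
  rw [pow_add, pow_mul, (zetaC_prim n).pow_eq_one, one_pow, mul_one]

lemma zetaC_pow_congr {n : ℕ} [NeZero n] {a b : ℕ} (h : a ≡ b [MOD n]) :
    zetaC n ^ a = zetaC n ^ b := by
  rw [zetaC_pow_mod n a, zetaC_pow_mod n b, h]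

/-- Key orbit lemma: `ν_S` is invariant under multiplication by units. -/
lemma nuW_mul_coprime {n : ℕ} [NeZero n] (S T : Finset (ZMod n))
    (h : IsFormallyDual S T) (y : ZMod n) (u : ℕ) (hu : u.Coprime n) :
    nuW S (y * u) = nuW S y := by
  obtain ⟨hS, hT, _, hd⟩ := h
  have hn : 0 < n := Nat.pos_of_ne_zero (NeZero.ne n)
  set ζ := zetaC n with hζdef
  have hζ : IsPrimitiveRoot ζ n := zetaC_prim n
  have hScard : (S.card : ℂ) ≠ 0 := Nat.cast_ne_zero.mpr hS.card_pos.ne'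
  have hTcard : (T.card : ℂ) ≠ 0 := Nat.cast_ne_zero.mpr hT.card_pos.ne'
  set a : ℂ := (T.card : ℂ) ^ 2 / (S.card : ℂ) with ha
  have ha0 : a ≠ 0 := div_ne_zero (pow_ne_zero 2 hTcard) hScard
  -- the rational constant
  set q : ℚ := (T.card : ℚ) ^ 2 / (S.card : ℚ) * (nuW S y : ℚ) with hq
  have hqc : (q : ℂ) = a * (nuW S y : ℂ) := by push_cast [hq, ha]; ring
  -- the polynomial
  set P : ℚ[X] := (∑ v : ZMod n, C ((nuW T v : ℚ)) * X ^ (v.val * y.val)) - C q with hP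
  have haevalP : ∀ z : ℂ, aeval z P =
      (∑ v : ZMod n, (nuW T v : ℂ) * z ^ (v.val * y.val)) - (q : ℂ) := by
    intro z
    simp [hP, map_sub, map_sum]
  have hroot : aeval ζ P = 0 := by
    rw [haevalP, hqc, ← hd y, sub_self]
  have hdvd : minpoly ℚ ζ ∣ P := minpoly.dvd ℚ ζ hroot
  have hmin : cyclotomic n ℚ = minpoly ℚ ζ := cyclotomic_eq_minpoly_rat hζ hn
  have hζu : IsPrimitiveRoot (ζ ^ u) n := hζ.pow_of_coprime u hu
  have hcyc : aeval (ζ ^ u) (cyclotomic n ℚ) = 0 := by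
    have := hζu.isRoot_cyclotomic (R := ℂ) hn
    rw [Polynomial.IsRoot, ← Polynomial.map_cyclotomic n (algebraMap ℚ ℂ),
      Polynomial.eval_map] at this
    exact this
  have hroot' : aeval (ζ ^ u) P = 0 := by
    obtain ⟨Q, hQ⟩ := hdvd
    rw [hQ, map_mul, ← hmin, hcyc, zero_mul]
  rw [haevalP, sub_eq_zero] at hroot'
  -- now the duality equation at `y * u`
  have hdyu := hd (y * u)
  have hexp : ∀ v : ZMod n, ζ ^ (v.val * (y * (u : ZMod n)).val) = (ζ ^ u) ^ (v.val * y.val) := by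
    intro v
    rw [← pow_mul]
    apply zetaC_pow_congr
    have : ((v.val * (y * (u : ZMod n)).val : ℕ) : ZMod n)
        = ((u * (v.val * y.val) : ℕ) : ZMod n) := by
      push_cast [ZMod.natCast_zmod_val]
      ring
    exact (ZMod.natCast_eq_natCast_iff _ _ _).mp this
  rw [show (∑ v : ZMod n, (nuW T v : ℂ) * ζ ^ (v.val * (y * (u : ZMod n)).val))
      = ∑ v : ZMod n, (nuW T v : ℂ) * (ζ ^ u) ^ (v.val * y.val) from
      Finset.sum_congr rfl fun v _ => by rw [hexp v], hroot', hqc] at hdyu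
  have := mul_left_cancel₀ ha0 hdyu
  exact_mod_cast this

theorem stmt8 (n : ℕ) [NeZero n] (S T : Finset (ZMod n)) (h : IsFormallyDual S T) :
    S.card ^ 2 = ∑ e ∈ n.divisors, Nat.totient (n / e) * nuW S (e : ZMod n) := by
  have hn : 0 < n := Nat.pos_of_ne_zero (NeZero.ne n)
  -- |S|^2 = total count
  have h1 : S.card ^ 2 = ∑ y : ZMod n, nuW S y := by
    rw [sq, ← Finset.card_product]
    exact Finset.card_eq_sum_card_fiberwise (fun p _ => Finset.mem_univ _)
  -- partition by gcd
  have h2 : (∑ y : ZMod n, nuW S y) =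
      ∑ e ∈ n.divisors, ∑ y ∈ Finset.univ.filter (fun y : ZMod n => n.gcd y.val = e), nuW S y :=
    (Finset.sum_fiberwise_of_maps_to (g := fun y : ZMod n => n.gcd y.val)
      (fun y _ => Nat.mem_divisors.mpr ⟨Nat.gcd_dvd_left _ _, hn.ne'⟩) _).symm
  rw [h1, h2]
  refine Finset.sum_congr rfl fun e he => ?_
  obtain ⟨hed, _⟩ := Nat.mem_divisors.mp he
  -- each fiber element has the same nuW value as e
  have hfib : ∀ y ∈ Finset.univ.filter (fun y : ZMod n => n.gcd y.val = e),
      nuW S y = nuW S (e : ZMod n) := by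
    intro y hy
    rw [Finset.mem_filter] at hy
    obtain ⟨d, hdn, w, hw, hyw⟩ := ZMod.eq_unit_mul_divisor y
    obtain ⟨wu, rfl⟩ := hw
    set c := ((wu : ZMod n)).val with hc
    have hco : c.Coprime n := ZMod.val_coe_unit_coprime wu
    have hvm : y.val = (c * d) % n := by
      rw [hyw, ZMod.val_mul, ZMod.val_natCast, Nat.mul_mod, Nat.mod_mod_of_dvd _ dvd_rfl,
        ← Nat.mul_mod]
    have h1 : n.gcd y.val = d := by
      rw [hvm, Nat.gcd_comm, ← Nat.gcd_rec, Nat.gcd_comm, Nat.Coprime.gcd_mul_left_cancel d hco,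
        Nat.gcd_eq_left hdn]
    rw [h1] at hy
    have hye : y = (e : ZMod n) * (c : ZMod n) := by
      rw [hyw, hy.2, mul_comm]
      congr 1
      exact (ZMod.natCast_zmod_val _).symm
    rw [hye]
    exact nuW_mul_coprime S T h (e : ZMod n) c hco
  rw [Finset.sum_congr rfl hfib, Finset.sum_const, smul_eq_mul]
  congr 1
  rw [Nat.totient_div_of_dvd hed]
  apply Finset.card_bij (fun y _ => y.val)
  · intro y hy
    rw [Finset.mem_filter] at hy ⊢
    exact ⟨Finset.mem_range.mpr (ZMod.val_lt y), hy.2⟩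
  · intro y _ y' _ hvv
    exact ZMod.val_injective n hvv
  · intro k hk
    rw [Finset.mem_filter, Finset.mem_range] at hk
    refine ⟨(k : ZMod n), Finset.mem_filter.mpr ⟨Finset.mem_univ _, ?_⟩, ?_⟩
    · rw [ZMod.val_natCast_of_lt hk.1]; exact hk.2
    · rw [ZMod.val_natCast_of_lt hk.1]
end

section
/- Let p be prime, k ≥ 1, and S ⊆ ℤ/p^kℤ a primitive formal-dual set. Then ν_S(1) > 0, i.e., there exist a, b ∈ S with a − b = 1. -/
open Finset Complex

/-- `S` is contained in a coset of a proper (additive) subgroup. -/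
def InProperCoset {m : ℕ} [NeZero m] (S : Finset (ZMod m)) : Prop :=
  ∃ H : AddSubgroup (ZMod m), H ≠ ⊤ ∧ ∃ c : ZMod m, ∀ x ∈ S, x - c ∈ H

/-! Since `S` lies in no coset of the subgroup of non-units of the local ring `ℤ/p^kℤ`, some
difference `a - b` of elements of `S` is a unit `u`. By duality `ν_S` is, up to a nonzero rational
factor, the Fourier transform of `ν_{T'}`, so its values are rational. The Galois automorphism
`ζ ↦ ζ ^ u` of `ℚ(ζ)` fixes them and moves the transform at `y` to the transform at `u * y`;
hence `ν_S(1) = ν_S(u) > 0`. -/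

open Polynomial

theorem isPrimitiveRoot_zetaC {n : ℕ} (hn : n ≠ 0) : IsPrimitiveRoot (zetaC n) n := by
  simpa [zetaC] using Complex.isPrimitiveRoot_exp n hn

theorem zetaC_pow_val_mul_val {n : ℕ} [NeZero n] (a b : ZMod n) :
    zetaC n ^ (a.val * b.val) = zetaC n ^ (a * b).val := by
  rw [ZMod.val_mul, ← pow_mod_orderOf, ← (isPrimitiveRoot_zetaC (NeZero.ne n)).eq_orderOf]

theorem IsPrimitiveRoot.aeval_eq_zero_of_aeval_eq_zero {K : Type*} [Field K] [CharZero K]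
    {n : ℕ} (hn : 0 < n) {ζ ξ : K} (hζ : IsPrimitiveRoot ζ n) (hξ : IsPrimitiveRoot ξ n)
    {P : ℚ[X]} (hP : aeval ζ P = 0) : aeval ξ P = 0 := by
  obtain ⟨Q, rfl⟩ : cyclotomic n ℚ ∣ P := by
    rw [cyclotomic_eq_minpoly_rat hζ hn]
    exact minpoly.dvd ℚ ζ hP
  have hroot : aeval ξ (cyclotomic n ℚ) = 0 := by
    rw [aeval_def, ← eval_map, map_cyclotomic]
    exact hξ.isRoot_cyclotomic hn
  rw [map_mul, hroot, zero_mul]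

theorem sum_mul_zetaC_pow_units_mul {n : ℕ} [NeZero n] (f : ZMod n → ℚ) (r : ℚ)
    (u : (ZMod n)ˣ) (y : ZMod n) (h : ∑ v, (f v : ℂ) * zetaC n ^ (v * y).val = r) :
    ∑ v, (f v : ℂ) * zetaC n ^ (v * (u * y)).val = r := by
  have hζ := isPrimitiveRoot_zetaC (NeZero.ne n)
  set P : ℚ[X] := ∑ v, C (f v) * X ^ (v * y).val - C r
  have haeval : ∀ ξ : ℂ, aeval ξ P = ∑ v, (f v : ℂ) * ξ ^ (v * y).val - r := by
    intro ξ
    simp [P, map_sum, eq_ratCast]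
  have hP : aeval (zetaC n ^ (u : ZMod n).val) P = 0 :=
    hζ.aeval_eq_zero_of_aeval_eq_zero (Nat.pos_of_neZero n)
      (hζ.pow_of_coprime _ (ZMod.val_coe_unit_coprime u)) (by rw [haeval, h, sub_self])
  rw [haeval, sub_eq_zero] at hP
  rw [← hP]
  refine Finset.sum_congr rfl fun v _ => ?_
  rw [← pow_mul, zetaC_pow_val_mul_val, mul_left_comm]

theorem nuW_pos_of_mem {n : ℕ} [NeZero n] {S : Finset (ZMod n)} {a b : ZMod n}
    (ha : a ∈ S) (hb : b ∈ S) : 0 < nuW S (a - b) :=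
  Finset.card_pos.mpr ⟨(a, b), by simp [ha, hb]⟩

theorem IsFormallyDual.nuW_units_mul {n : ℕ} [NeZero n] {S T : Finset (ZMod n)}
    (h : IsFormallyDual S T) (u : (ZMod n)ˣ) (y : ZMod n) : nuW S (u * y) = nuW S y := by
  obtain ⟨hS, hT, -, hdual⟩ := h
  set c : ℚ := (T.card : ℚ) ^ 2 / S.card
  have hc : c ≠ 0 := by
    have := hS.card_pos; have := hT.card_pos
    positivity
  have hfourier : ∀ y, ∑ v, ((nuW T v : ℚ) : ℂ) * zetaC n ^ (v * y).val = (c * nuW S y : ℚ) := by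
    intro y
    simp_rw [← zetaC_pow_val_mul_val, Rat.cast_natCast, ← hdual y, c]
    push_cast; ring
  have := (sum_mul_zetaC_pow_units_mul _ _ u y (hfourier y)).symm.trans (hfourier (u * y))
  exact_mod_cast (mul_left_cancel₀ hc (Rat.cast_injective this)).symm

theorem isLocalRing_zmod_prime_pow {p k : ℕ} (hp : p.Prime) (hk : 0 < k) :
    IsLocalRing (ZMod (p ^ k)) := by
  have : Fact (1 < p ^ k) := ⟨Nat.one_lt_pow hk.ne' hp.one_lt⟩
  refine IsLocalRing.of_nonunits_add fun a b ha hb hab => ?_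
  rw [mem_nonunits_iff, ← ZMod.natCast_zmod_val a, ZMod.isUnit_natCast_iff_not_dvd_pow hp hk,
    not_not] at ha
  rw [mem_nonunits_iff, ← ZMod.natCast_zmod_val b, ZMod.isUnit_natCast_iff_not_dvd_pow hp hk,
    not_not] at hb
  rw [← ZMod.natCast_zmod_val a, ← ZMod.natCast_zmod_val b, ← Nat.cast_add,
    ZMod.isUnit_natCast_iff_not_dvd_pow hp hk] at hab
  exact hab (dvd_add ha hb)

theorem exists_isUnit_sub_of_not_inProperCoset {m : ℕ} [NeZero m] [IsLocalRing (ZMod m)]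
    {S : Finset (ZMod m)} (h : ¬ InProperCoset S) : ∃ a ∈ S, ∃ b ∈ S, IsUnit (a - b) := by
  by_contra! hsub
  refine h ⟨(IsLocalRing.maximalIdeal (ZMod m)).toAddSubgroup, ?_, ?_⟩
  · intro htop
    exact (IsLocalRing.maximalIdeal.isMaximal (ZMod m)).ne_top
      (Submodule.toAddSubgroup_injective (htop.trans (Submodule.top_toAddSubgroup).symm))
  · rcases S.eq_empty_or_nonempty with rfl | ⟨c, hc⟩
    · exact ⟨0, by simp⟩
    · exact ⟨c, fun x hx => (IsLocalRing.mem_maximalIdeal _).mpr (hsub x hx c hc)⟩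

theorem stmt15_general (p k : ℕ) [Fact p.Prime] (hk : 1 ≤ k) (S T' : Finset (ZMod (p ^ k)))
    (hST' : IsFormallyDual S T') (hSnp : ¬ InProperCoset S) :
    0 < nuW S 1 := by
  have := isLocalRing_zmod_prime_pow (Fact.out : p.Prime) hk
  obtain ⟨a, ha, b, hb, u, hu⟩ := exists_isUnit_sub_of_not_inProperCoset hSnp
  calc 0 < nuW S (a - b) := nuW_pos_of_mem ha hb
    _ = nuW S 1 := by rw [← hu, ← hST'.nuW_units_mul u 1, mul_one]

theorem stmt15 (p k : ℕ) [Fact p.Prime] (hk : 1 ≤ k) (S T' : Finset (ZMod (p ^ k)))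
    (hST' : IsFormallyDual S T') (hSnp : ¬ InProperCoset S) (hT'np : ¬ InProperCoset T') :
    0 < nuW S 1 :=
  stmt15_general p k hk S T' hST' hSnp
end
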